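/- arXiv:1003.2084 — 2 statements merged into one kernel-verified Lean document; each statement's English description precedes it below -/
import Mathlib

section
/- Let n ≥ 2 be a natural number and set α* = ((n−1)/(n+1))^(1/n) (real power). Then for every α ∈ (0,1), 1/(α^(n(n−1)/2)·(1 − α^n)) ≥ 1/(α*^(n(n−1)/2)·(1 − α*^n)); i.e., the function f(α) = 1/(α^(n(n−1)/2)·(1 − α^n)) attains its minimum over the open interval (0,1) at α = α*. -/
/-!
Writing `t = αⁿ`, the square of the denominator `α^(n(n-1)/2) (1 - αⁿ)` is `t^(n-1) (1 - t)²`.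
By weighted AM-GM applied to `t / p` and `(1 - t) / (1 - p)` with weights `p = (n-1)/(n+1)` and
`1 - p`, this polynomial is maximal on `[0, 1]` at `t = p`, and `α*ⁿ = p`.
-/

open Real

theorem pow_mul_one_sub_pow_le {m k : ℕ} (hm : 0 < m) (hk : 0 < k) {t : ℝ} (ht₀ : 0 ≤ t)
    (ht₁ : t ≤ 1) :
    t ^ m * (1 - t) ^ k ≤ (m / (m + k) : ℝ) ^ m * (1 - m / (m + k) : ℝ) ^ k := by
  set s : ℝ := m + k
  set p : ℝ := m / s
  have hs : 0 < s := by positivity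
  have hp : 0 < p := by positivity
  have hq : 1 - p = k / s := by
    rw [eq_div_iff hs.ne', sub_mul, div_mul_cancel₀ _ hs.ne']; ring
  have hq' : 0 < 1 - p := by rw [hq]; positivity
  have hamgm := geom_mean_le_arith_mean2_weighted hp.le hq'.le (div_nonneg ht₀ hp.le)
    (div_nonneg (sub_nonneg.2 ht₁) hq'.le) (by ring)
  rw [mul_div_cancel₀ _ hp.ne', mul_div_cancel₀ _ hq'.ne', add_sub_cancel] at hamgm
  have hpow : (t / p) ^ m * ((1 - t) / (1 - p)) ^ k ≤ 1 := by
    have := rpow_le_one (by positivity) hamgm hs.le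
    rwa [mul_rpow (by positivity) (by positivity), ← rpow_mul (by positivity),
      ← rpow_mul (by positivity), div_mul_cancel₀ _ hs.ne', hq, div_mul_cancel₀ _ hs.ne',
      rpow_natCast, rpow_natCast, ← hq] at this
  rwa [div_pow t p, div_pow (1 - t) (1 - p), div_mul_div_comm, div_le_one (by positivity)] at hpow

theorem sq_pow_choose_two_mul_one_sub_pow {R : Type*} [CommRing R] (n : ℕ) (x : R) :
    (x ^ (n * (n - 1) / 2) * (1 - x ^ n)) ^ 2 = (x ^ n) ^ (n - 1) * (1 - x ^ n) ^ 2 := by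
  rw [mul_pow, ← pow_mul, Nat.div_two_mul_two_of_even (Nat.even_mul_pred_self n), pow_mul]

/-- The average election time `f(α) = 1/(α^(n(n-1)/2)·(1 - α^n))` attains its minimum
over `α ∈ (0,1)` at the optimal parameter `α* = ((n-1)/(n+1))^(1/n)`. -/
theorem optimal_activation_parameter_minimizes (n : ℕ) (hn : 2 ≤ n) (αstar : ℝ)
    (hstar : αstar = (((n : ℝ) - 1) / ((n : ℝ) + 1)) ^ ((1 : ℝ) / (n : ℝ))) :
    ∀ α ∈ Set.Ioo (0 : ℝ) 1,
      1 / (α ^ (n * (n - 1) / 2) * (1 - α ^ n)) ≥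
        1 / (αstar ^ (n * (n - 1) / 2) * (1 - αstar ^ n)) := by
  rintro α ⟨hα₀, hα₁⟩
  have hn' : (2 : ℝ) ≤ n := by exact_mod_cast hn
  have hweight : ((n - 1 : ℕ) : ℝ) / ((n - 1 : ℕ) + (2 : ℕ)) = ((n : ℝ) - 1) / (n + 1) := by
    rw [Nat.cast_pred (by omega)]; push_cast; ring
  have hstar_pow : αstar ^ n = ((n : ℝ) - 1) / (n + 1) := by
    rw [hstar, one_div, rpow_inv_natCast_pow (div_nonneg (by linarith) (by linarith)) (by omega)]
  have hstar_pos : 0 < αstar := by rw [hstar]; exact rpow_pos_of_pos (div_pos (by linarith) (by linarith)) _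
  have hα_pos : 0 < α ^ (n * (n - 1) / 2) * (1 - α ^ n) :=
    mul_pos (pow_pos hα₀ _) (sub_pos.2 (pow_lt_one₀ hα₀.le hα₁ (by omega)))
  have hstar_nonneg : 0 ≤ αstar ^ (n * (n - 1) / 2) * (1 - αstar ^ n) := by
    refine mul_nonneg (pow_nonneg hstar_pos.le _) (sub_nonneg.2 ?_)
    rw [hstar_pow, div_le_one (by linarith)]; linarith
  have hsq : (α ^ (n * (n - 1) / 2) * (1 - α ^ n)) ^ 2
      ≤ (αstar ^ (n * (n - 1) / 2) * (1 - αstar ^ n)) ^ 2 := by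
    rw [sq_pow_choose_two_mul_one_sub_pow, sq_pow_choose_two_mul_one_sub_pow, hstar_pow,
      ← hweight]
    exact pow_mul_one_sub_pow_le (by omega) two_pos (pow_nonneg hα₀.le n)
      (pow_le_one₀ hα₀.le hα₁.le)
  exact one_div_le_one_div_of_le hα_pos (le_of_pow_le_pow_left₀ two_ne_zero hstar_nonneg hsq)
end

section
/- The sequence n²·(1 − ((n−1)/(n+1))^(1/n)) (real power) converges, as n → ∞ over natural numbers n ≥ 2, to 2; equivalently, the optimal activation parameter 𝒜₀(n) = 1 − ((n−1)/(n+1))^(1/n) satisfies 𝒜₀(n) ~ 1 − (1/e²)^(1/n²) as n → ∞. -/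
open Filter Topology Asymptotics

/-!
Writing `((n-1)/(n+1))^(1/n) = exp (c n)` with `c n = log ((n-1)/(n+1)) / n`, the classical limit
`x log (1 - 2/x) → -2` gives `n² c n → -2`; since `1 - exp c ~ -c` as `c → 0`, this yields
`n² 𝒜₀(n) → 2`. The same argument with `c n = -2/n²` gives `n² (1 - exp (-2/n²)) → 2`, and the
ratio of the two tends to `1`.
-/

lemma Real.isEquivalent_exp_sub_one : (fun x => Real.exp x - 1) ~[𝓝 0] id := by
  have h := hasDerivAt_iff_isLittleO_nhds_zero.1 (Real.hasDerivAt_exp 0)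
  simp only [zero_add, Real.exp_zero, smul_eq_mul, mul_one] at h
  exact h

section

variable {α : Type*} {l : Filter α} {s c : α → ℝ} {L : ℝ}

lemma Filter.Tendsto.tendsto_zero_of_tendsto_mul (hs : Tendsto s l atTop)
    (h : Tendsto (fun x => s x * c x) l (𝓝 L)) : Tendsto c l (𝓝 0) :=
  tendsto_zero_of_isBoundedUnder_smul_of_tendsto_cobounded h.norm.isBoundedUnder_le
    (hs.mono_right IsOrderBornology.atTop_le_cobounded)

lemma Filter.Tendsto.mul_one_sub_exp (hs : Tendsto s l atTop)
    (h : Tendsto (fun x => s x * c x) l (𝓝 (-L))) :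
    Tendsto (fun x => s x * (1 - Real.exp (c x))) l (𝓝 L) := by
  have hequiv : (fun x => s x * (Real.exp (c x) - 1)) ~[l] fun x => s x * c x :=
    IsEquivalent.refl.mul
      (Real.isEquivalent_exp_sub_one.comp_tendsto (hs.tendsto_zero_of_tendsto_mul h))
  have hneg := (hequiv.tendsto_nhds_iff.2 h).neg
  rw [neg_neg] at hneg
  exact hneg.congr fun x => by ring

end

lemma tendsto_mul_log_sub_one_div_add_one :
    Tendsto (fun x : ℝ => x * Real.log ((x - 1) / (x + 1))) atTop (𝓝 (-2)) := by
  have hx : Tendsto (fun x : ℝ => x + 1) atTop atTop :=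
    tendsto_atTop_add_const_right _ 1 tendsto_id
  have h : Tendsto (fun x : ℝ => (x + 1) * Real.log ((x - 1) / (x + 1))) atTop (𝓝 (-2)) := by
    refine ((Real.tendsto_mul_log_one_add_div_atTop (-2)).comp hx).congr' ?_
    filter_upwards [eventually_gt_atTop 0] with x hx
    have : 1 + -2 / (x + 1) = (x - 1) / (x + 1) := by field_simp; ring
    simp only [Function.comp_apply, this]
  have hsub := h.sub (hx.tendsto_zero_of_tendsto_mul h)
  rw [sub_zero] at hsub
  exact hsub.congr fun x => by ring

lemma tendsto_natCast_sq_atTop : Tendsto (fun n : ℕ => (n : ℝ) ^ 2) atTop atTop :=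
  (tendsto_pow_atTop two_ne_zero).comp tendsto_natCast_atTop_atTop

lemma tendsto_sq_mul_one_sub_rpow_sub_one_div_add_one :
    Tendsto (fun n : ℕ => (n : ℝ) ^ 2 *
      (1 - (((n : ℝ) - 1) / ((n : ℝ) + 1)) ^ ((1 : ℝ) / (n : ℝ)))) atTop (𝓝 2) := by
  have hc : Tendsto (fun n : ℕ => (n : ℝ) ^ 2 *
      (Real.log (((n : ℝ) - 1) / ((n : ℝ) + 1)) * (1 / n))) atTop (𝓝 (-2)) := by
    refine (tendsto_mul_log_sub_one_div_add_one.comp tendsto_natCast_atTop_atTop).congr' ?_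
    filter_upwards [eventually_ne_atTop 0] with n hn
    simp only [Function.comp_apply]
    field_simp
  refine (tendsto_natCast_sq_atTop.mul_one_sub_exp hc).congr' ?_
  filter_upwards [eventually_ge_atTop 2] with n hn
  have hn : (2 : ℝ) ≤ n := by exact_mod_cast hn
  rw [Real.rpow_def_of_pos (by apply div_pos <;> linarith)]

lemma tendsto_sq_mul_one_sub_exp_neg_two_div_sq :
    Tendsto (fun n : ℕ => (n : ℝ) ^ 2 * (1 - Real.exp (-2 / (n : ℝ) ^ 2))) atTop (𝓝 2) := by
  refine tendsto_natCast_sq_atTop.mul_one_sub_exp (tendsto_const_nhds.congr' ?_)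
  filter_upwards [eventually_ne_atTop 0] with n hn
  field_simp

/-- The optimal activation parameter `𝒜₀(n) = 1 - ((n-1)/(n+1))^(1/n)` satisfies
`n²·𝒜₀(n) → 2` as `n → ∞`; equivalently `𝒜₀(n) ~ 1 - (1/e²)^(1/n²)`, i.e. the ratio
`𝒜₀(n) / (1 - exp(-2/n²))` tends to `1`. -/
theorem optimal_activation_parameter_asymptotics :
    Tendsto
        (fun n : ℕ =>
          (n : ℝ) ^ 2 *
            (1 - (((n : ℝ) - 1) / ((n : ℝ) + 1)) ^ ((1 : ℝ) / (n : ℝ)))) atTop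
        (nhds 2) ∧
      Tendsto
        (fun n : ℕ =>
          (1 - (((n : ℝ) - 1) / ((n : ℝ) + 1)) ^ ((1 : ℝ) / (n : ℝ))) /
            (1 - Real.exp (-2 / (n : ℝ) ^ 2))) atTop (nhds 1) := by
  have hratio := tendsto_sq_mul_one_sub_rpow_sub_one_div_add_one.div
    tendsto_sq_mul_one_sub_exp_neg_two_div_sq two_ne_zero
  rw [div_self two_ne_zero] at hratio
  refine ⟨tendsto_sq_mul_one_sub_rpow_sub_one_div_add_one, hratio.congr' ?_⟩
  filter_upwards [eventually_ne_atTop 0] with n hn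
  exact mul_div_mul_left _ _ (by positivity)
end
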